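/- Let (Ω, ℱ, ℙ) be a probability space and let {λ_{j,k} : j ∈ ℕ, k ∈ {0, …, 2^j − 1}} be a family of real-valued random variables on Ω such that each λ_{j,k} has the standard Gaussian law N(0,1). Then the random variable C* := sup_{j ∈ ℕ, 0 ≤ k ≤ 2^j − 1} |λ_{j,k}| / √(1 + j) is almost surely finite, and moreover E(C*^p) < ∞ for every real number p > 0. In particular, there is an event Ω* of probability 1 and a positive random variable C* with finite moments of every order such that for all ω ∈ Ω*, all j ∈ ℕ and all k ∈ {0, …, 2^j − 1}, |λ_{j,k}(ω)| ≤ C*(ω) √(1 + j). -/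

import Mathlib

/-!
Each `λ_{j,k}` is 1-sub-Gaussian, so `P(|λ_{j,k}| ≥ t √(1 + j)) ≤ 2 exp(-t² (1 + j) / 2)`. A union
bound over the `2^j` indices of level `j` leaves a geometric series in `2 exp(-t²/2)`, whence
`P(C* > t) ≤ 4 exp(-t²/2)` for `t ≥ 2`, without any independence. Such a Gaussian tail forces
`C* < ∞` a.s., and the layer-cake formula turns it into finite moments of every order.
-/

open MeasureTheory ProbabilityTheory Set Filter
open scoped ENNReal NNReal Topology

namespace ProbabilityTheory

lemma hasSubgaussianMGF_id_gaussianReal (v : ℝ≥0) : HasSubgaussianMGF id v (gaussianReal 0 v) where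
  integrable_exp_mul t := integrable_exp_mul_gaussianReal t
  mgf_le t := by simp [mgf_id_gaussianReal]

lemma hasSubgaussianMGF_of_map_eq_gaussianReal {Ω : Type*} [MeasurableSpace Ω] {P : Measure Ω}
    {X : Ω → ℝ} {v : ℝ≥0} (hX : AEMeasurable X P) (hlaw : P.map X = gaussianReal 0 v) :
    HasSubgaussianMGF X v P := by
  rw [← HasSubgaussianMGF.id_map_iff hX, hlaw]
  exact hasSubgaussianMGF_id_gaussianReal v

lemma HasSubgaussianMGF.measure_abs_ge_le {Ω : Type*} [MeasurableSpace Ω] {μ : Measure Ω}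
    [IsFiniteMeasure μ] {X : Ω → ℝ} {c : ℝ≥0} (h : HasSubgaussianMGF X c μ) {ε : ℝ} (hε : 0 ≤ ε) :
    μ {ω | ε ≤ |X ω|} ≤ ENNReal.ofReal (2 * Real.exp (-ε ^ 2 / (2 * c))) := by
  have hsplit : {ω | ε ≤ |X ω|} = {ω | ε ≤ X ω} ∪ {ω | ε ≤ (-X) ω} := by
    ext; exact le_abs (a := ε)
  rw [← ofReal_measureReal, hsplit]
  refine ENNReal.ofReal_le_ofReal ((measureReal_union_le _ _).trans ?_)
  linarith [h.measure_ge_le hε, h.neg.measure_ge_le hε]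

end ProbabilityTheory

section TailMoments

variable {Ω : Type*} [MeasurableSpace Ω] {μ : Measure Ω} {S : Ω → ℝ≥0∞} {C b : ℝ}

lemma ae_lt_top_of_measure_lt_le_exp (hb : 0 < b)
    (htail : ∀ t : ℝ, 0 < t → μ {ω | ENNReal.ofReal t < S ω} ≤
      ENNReal.ofReal (C * Real.exp (-b * t ^ 2))) :
    ∀ᵐ ω ∂μ, S ω < ⊤ := by
  have hlim : Tendsto (fun t : ℝ => ENNReal.ofReal (C * Real.exp (-b * t ^ 2))) atTop (𝓝 0) := by
    have hexp : Tendsto (fun t : ℝ => Real.exp (-b * t ^ 2)) atTop (𝓝 0) :=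
      Real.tendsto_exp_atBot.comp ((tendsto_pow_atTop two_ne_zero).const_mul_atTop_of_neg
        (neg_lt_zero.mpr hb))
    simpa using ENNReal.tendsto_ofReal (hexp.const_mul C)
  refine ae_iff.mpr (le_antisymm ?_ zero_le)
  refine ge_of_tendsto hlim ((eventually_gt_atTop 0).mono fun t ht => ?_)
  exact (measure_mono fun ω hω => by simp_all).trans (htail t ht)

lemma lintegral_rpow_lt_top_of_measure_lt_le_exp (hS : AEMeasurable S μ) (hb : 0 < b)
    (htail : ∀ t : ℝ, 0 < t → μ {ω | ENNReal.ofReal t < S ω} ≤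
      ENNReal.ofReal (C * Real.exp (-b * t ^ 2)))
    {p : ℝ} (hp : 0 < p) :
    ∫⁻ ω, S ω ^ p ∂μ < ⊤ := by
  have hreal : ∫⁻ ω, S ω ^ p ∂μ = ∫⁻ ω, ENNReal.ofReal ((S ω).toReal ^ p) ∂μ := by
    refine lintegral_congr_ae ((ae_lt_top_of_measure_lt_le_exp hb htail).mono fun ω hω => ?_)
    dsimp only
    rw [← ENNReal.ofReal_rpow_of_nonneg ENNReal.toReal_nonneg hp.le,
      ENNReal.ofReal_toReal hω.ne]
  rw [hreal, lintegral_rpow_eq_lintegral_meas_lt_mul μ (ae_of_all _ fun _ => ENNReal.toReal_nonneg)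
    hS.ennreal_toReal hp]
  refine ENNReal.mul_lt_top ENNReal.ofReal_lt_top (lt_of_le_of_lt ?_
    ((integrableOn_rpow_mul_exp_neg_mul_sq hb (by linarith : -1 < p - 1)).const_mul
      C).lintegral_lt_top)
  refine setLIntegral_mono' measurableSet_Ioi fun t (ht : 0 < t) => ?_
  have hlt : {ω | t < (S ω).toReal} ⊆ {ω | ENNReal.ofReal t < S ω} := fun ω hω =>
    (ENNReal.ofReal_lt_ofReal_iff_of_nonneg ht.le).mpr hω |>.trans_le ENNReal.ofReal_toReal_le
  calc μ {ω | t < (S ω).toReal} * ENNReal.ofReal (t ^ (p - 1))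
      ≤ ENNReal.ofReal (C * Real.exp (-b * t ^ 2)) * ENNReal.ofReal (t ^ (p - 1)) := by
        gcongr; exact (measure_mono hlt).trans (htail t ht)
    _ = ENNReal.ofReal (C * (t ^ (p - 1) * Real.exp (-b * t ^ 2))) := by
        rw [← ENNReal.ofReal_mul' (by positivity)]; ring_nf

end TailMoments

lemma tsum_two_pow_mul_ofReal_exp_le {t : ℝ} (ht : 2 ≤ t) :
    ∑' j : ℕ, (2 : ℝ≥0∞) ^ j * ENNReal.ofReal (2 * Real.exp (-t ^ 2 * (1 + j) / 2)) ≤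
      ENNReal.ofReal (4 * Real.exp (-t ^ 2 / 2)) := by
  set q := Real.exp (-t ^ 2 / 2) with hq_def
  have hq0 : 0 < q := Real.exp_pos _
  have hq : 4 * q ≤ 1 := by
    have hinv : q * Real.exp (t ^ 2 / 2) = 1 := by rw [hq_def, ← Real.exp_add]; simp [neg_div]
    have hx : 2 ≤ t ^ 2 / 2 := by nlinarith
    have hE : 4 ≤ Real.exp (t ^ 2 / 2) := by
      nlinarith [Real.quadratic_le_exp_of_nonneg (x := t ^ 2 / 2) (by positivity)]
    nlinarith
  have hterm : ∀ j : ℕ, (2 : ℝ≥0∞) ^ j * ENNReal.ofReal (2 * Real.exp (-t ^ 2 * (1 + j) / 2)) =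
      ENNReal.ofReal (2 * q * (2 * q) ^ j) := fun j => by
    have hexp : Real.exp (-t ^ 2 * (1 + j) / 2) = q * q ^ j := by
      rw [hq_def, ← Real.exp_nat_mul, ← Real.exp_add]; ring_nf
    rw [hexp, ← ENNReal.ofReal_ofNat 2, ← ENNReal.ofReal_pow zero_le_two,
      ← ENNReal.ofReal_mul (by positivity)]
    ring_nf
  have hgeom : Summable fun j : ℕ => 2 * q * (2 * q) ^ j :=
    (summable_geometric_of_lt_one (by positivity) (by linarith)).mul_left _
  calc ∑' j : ℕ, (2 : ℝ≥0∞) ^ j * ENNReal.ofReal (2 * Real.exp (-t ^ 2 * (1 + j) / 2))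
      = ENNReal.ofReal (∑' j : ℕ, 2 * q * (2 * q) ^ j) := by
        rw [ENNReal.ofReal_tsum_of_nonneg (fun j => by positivity) hgeom]
        exact tsum_congr hterm
    _ ≤ ENNReal.ofReal (4 * q) := by
        refine ENNReal.ofReal_le_ofReal ?_
        rw [tsum_mul_left, tsum_geometric_of_lt_one (by positivity) (by linarith),
          ← div_eq_mul_inv, div_le_iff₀ (by linarith)]
        nlinarith

section NormalizedSup

variable {Ω : Type*}

noncomputable def normalizedSup (lam : ℕ → ℕ → Ω → ℝ) (ω : Ω) : ℝ≥0∞ :=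
  ⨆ (j : ℕ) (k : Fin (2 ^ j)), ENNReal.ofReal (|lam j (k : ℕ) ω| / Real.sqrt (1 + (j : ℝ)))

variable {lam : ℕ → ℕ → Ω → ℝ}

lemma measurable_normalizedSup [MeasurableSpace Ω] (hmeas : ∀ j k, Measurable (lam j k)) :
    Measurable (normalizedSup lam) :=
  Measurable.iSup fun j => Measurable.iSup fun k =>
    ((hmeas j k).abs.div_const _).ennreal_ofReal

lemma abs_le_toReal_normalizedSup_mul_sqrt {ω : Ω} (hω : normalizedSup lam ω ≠ ⊤) {j k : ℕ}
    (hk : k < 2 ^ j) :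
    |lam j k ω| ≤ (normalizedSup lam ω).toReal * Real.sqrt (1 + (j : ℝ)) := by
  have hle : ENNReal.ofReal (|lam j k ω| / Real.sqrt (1 + (j : ℝ))) ≤ normalizedSup lam ω :=
    le_iSup₂_of_le (f := fun (j : ℕ) (k : Fin (2 ^ j)) =>
      ENNReal.ofReal (|lam j (k : ℕ) ω| / Real.sqrt (1 + (j : ℝ)))) j ⟨k, hk⟩ le_rfl
  rw [ENNReal.ofReal_le_iff_le_toReal hω, div_le_iff₀ (by positivity)] at hle
  exact hle

lemma measure_lt_normalizedSup_le_tsum [MeasurableSpace Ω] {P : Measure Ω} [IsFiniteMeasure P]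
    (hsub : ∀ j k, k < 2 ^ j → HasSubgaussianMGF (lam j k) 1 P) {t : ℝ} (ht : 0 ≤ t) :
    P {ω | ENNReal.ofReal t < normalizedSup lam ω} ≤
      ∑' j : ℕ, 2 ^ j * ENNReal.ofReal (2 * Real.exp (-t ^ 2 * (1 + j) / 2)) := by
  have hcover : {ω | ENNReal.ofReal t < normalizedSup lam ω} ⊆
      ⋃ (j : ℕ) (k : Fin (2 ^ j)), {ω | t * Real.sqrt (1 + (j : ℝ)) ≤ |lam j k ω|} := by
    intro ω hω
    simp only [normalizedSup, mem_ofPred_eq, lt_iSup_iff, ENNReal.ofReal_lt_ofReal_iff'] at hω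
    obtain ⟨j, k, hjk, -⟩ := hω
    exact mem_iUnion₂.mpr ⟨j, k, ((lt_div_iff₀ (by positivity)).mp hjk).le⟩
  have hterm : ∀ (j : ℕ) (k : Fin (2 ^ j)),
      P {ω | t * Real.sqrt (1 + (j : ℝ)) ≤ |lam j k ω|} ≤
        ENNReal.ofReal (2 * Real.exp (-t ^ 2 * (1 + j) / 2)) := fun j k => by
    refine ((hsub j k k.2).measure_abs_ge_le (by positivity)).trans_eq ?_
    rw [mul_pow, Real.sq_sqrt (by positivity)]
    congr 3; push_cast; ring
  calc P {ω | ENNReal.ofReal t < normalizedSup lam ω}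
      ≤ ∑' (j : ℕ) (k : Fin (2 ^ j)), P {ω | t * Real.sqrt (1 + (j : ℝ)) ≤ |lam j k ω|} :=
        (measure_mono hcover).trans ((measure_iUnion_le _).trans
          (ENNReal.tsum_le_tsum fun j => measure_iUnion_le _))
    _ ≤ ∑' (j : ℕ) (_ : Fin (2 ^ j)), ENNReal.ofReal (2 * Real.exp (-t ^ 2 * (1 + j) / 2)) :=
        ENNReal.tsum_le_tsum fun j => ENNReal.tsum_le_tsum (hterm j)
    _ = ∑' j : ℕ, 2 ^ j * ENNReal.ofReal (2 * Real.exp (-t ^ 2 * (1 + j) / 2)) := by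
        simp [tsum_fintype]

lemma measure_lt_normalizedSup_le_exp [MeasurableSpace Ω] {P : Measure Ω} [IsProbabilityMeasure P]
    (hsub : ∀ j k, k < 2 ^ j → HasSubgaussianMGF (lam j k) 1 P) {t : ℝ} (ht : 0 ≤ t) :
    P {ω | ENNReal.ofReal t < normalizedSup lam ω} ≤
      ENNReal.ofReal (4 * Real.exp 2 * Real.exp (-t ^ 2 / 2)) := by
  rcases le_or_gt 2 t with h2 | h2
  · refine (measure_lt_normalizedSup_le_tsum hsub ht).trans
      ((tsum_two_pow_mul_ofReal_exp_le h2).trans (ENNReal.ofReal_le_ofReal ?_))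
    nlinarith [Real.one_le_exp zero_le_two, Real.exp_pos (-t ^ 2 / 2)]
  · refine prob_le_one.trans (ENNReal.one_le_ofReal.mpr ?_)
    rw [mul_assoc, ← Real.exp_add]
    nlinarith [Real.one_le_exp (x := 2 + -t ^ 2 / 2) (by nlinarith)]

end NormalizedSup

lemma ENNReal.ofReal_max_toReal_one_rpow_le (x : ℝ≥0∞) {p : ℝ} (hp : 0 ≤ p) :
    ENNReal.ofReal (max x.toReal 1 ^ p) ≤ x ^ p + 1 := by
  rcases le_total x.toReal 1 with hx | hx
  · rw [max_eq_right hx, Real.one_rpow, ENNReal.ofReal_one]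
    exact le_add_self
  · rw [max_eq_left hx, ← ENNReal.ofReal_rpow_of_nonneg ENNReal.toReal_nonneg hp]
    exact (ENNReal.rpow_le_rpow ENNReal.ofReal_toReal_le hp).trans le_self_add

theorem statement7 {Ω : Type*} [MeasurableSpace Ω] (P : Measure Ω) [IsProbabilityMeasure P]
    (lam : ℕ → ℕ → Ω → ℝ) (hmeas : ∀ j k, Measurable (lam j k))
    (hlaw : ∀ j k, k < 2 ^ j → Measure.map (lam j k) P = gaussianReal 0 1) :
    (∀ᵐ ω ∂P,
      (⨆ (j : ℕ) (k : Fin (2 ^ j)),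
        ENNReal.ofReal (|lam j (k : ℕ) ω| / Real.sqrt (1 + (j : ℝ)))) < ⊤) ∧
    (∀ p : ℝ, 0 < p →
      ∫⁻ ω, (⨆ (j : ℕ) (k : Fin (2 ^ j)),
        ENNReal.ofReal (|lam j (k : ℕ) ω| / Real.sqrt (1 + (j : ℝ)))) ^ p ∂P < ⊤) ∧
    ∃ (Ωstar : Set Ω) (Cstar : Ω → ℝ),
      P Ωstar = 1 ∧ (∀ ω, 0 < Cstar ω) ∧
      (∀ p : ℝ, 0 < p → ∫⁻ ω, ENNReal.ofReal (Cstar ω ^ p) ∂P < ⊤) ∧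
      ∀ ω ∈ Ωstar, ∀ j k : ℕ, k < 2 ^ j →
        |lam j k ω| ≤ Cstar ω * Real.sqrt (1 + (j : ℝ)) := by
  have hsub : ∀ j k, k < 2 ^ j → HasSubgaussianMGF (lam j k) 1 P := fun j k hk =>
    hasSubgaussianMGF_of_map_eq_gaussianReal (hmeas j k).aemeasurable (by simpa using hlaw j k hk)
  have htail : ∀ t : ℝ, 0 < t → P {ω | ENNReal.ofReal t < normalizedSup lam ω} ≤
      ENNReal.ofReal (4 * Real.exp 2 * Real.exp (-(1 / 2) * t ^ 2)) := fun t ht =>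
    (measure_lt_normalizedSup_le_exp hsub ht.le).trans_eq (by ring_nf)
  have hfin : ∀ᵐ ω ∂P, normalizedSup lam ω < ⊤ := ae_lt_top_of_measure_lt_le_exp one_half_pos htail
  have hmom : ∀ p : ℝ, 0 < p → ∫⁻ ω, normalizedSup lam ω ^ p ∂P < ⊤ := fun p hp =>
    lintegral_rpow_lt_top_of_measure_lt_le_exp (measurable_normalizedSup hmeas).aemeasurable
      one_half_pos htail hp
  refine ⟨hfin, hmom, {ω | normalizedSup lam ω < ⊤}, fun ω => max (normalizedSup lam ω).toReal 1,
    ?_, fun ω => lt_max_of_lt_right one_pos, fun p hp => ?_, fun ω hω j k hk => ?_⟩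
  · rw [← measure_univ (μ := P)]
    exact (ae_iff_measure_eq (measurableSet_lt (measurable_normalizedSup hmeas)
      measurable_const).nullMeasurableSet).mp hfin
  · calc ∫⁻ ω, ENNReal.ofReal (max (normalizedSup lam ω).toReal 1 ^ p) ∂P
        ≤ ∫⁻ ω, (normalizedSup lam ω ^ p + 1) ∂P :=
          lintegral_mono fun ω => ENNReal.ofReal_max_toReal_one_rpow_le _ hp.le
      _ < ⊤ := by
          rw [lintegral_add_right _ measurable_const, lintegral_const, measure_univ, mul_one]
          exact ENNReal.add_lt_top.mpr ⟨hmom p hp, ENNReal.one_lt_top⟩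
  · exact (abs_le_toReal_normalizedSup_mul_sqrt hω.ne hk).trans
      (mul_le_mul_of_nonneg_right (le_max_left _ _) (Real.sqrt_nonneg _))
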